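/- Let d ≥ 2, let B ⊆ ℝ^d be a strictly convex unit ball, let w ∈ ℝ^d be nonzero, let W = span{w}, and let π : ℝ^d → ℝ^d/W be the quotient map, with K = π(B) (a unit ball in ℝ^d/W ≅ ℝ^{d−1}). Then π restricted to the shadow boundary S_w = φ_w^{-1}(0) is a bijection onto the boundary ∂K, and π restricted to each of U^+ = φ_w^{-1}((0,∞)) and U^- = φ_w^{-1}((−∞,0)) is a bijection onto the interior of K. -/

import Mathlib

open scoped Pointwise Classical

/-- `B ⊆ ℝ^d` is a unit ball: compact, convex, symmetric about the origin, containing a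
neighborhood of 0. -/
def IsUnitBall {d : ℕ} (B : Set (EuclideanSpace ℝ (Fin d))) : Prop :=
  IsCompact B ∧ Convex ℝ B ∧ B = -B ∧ B ∈ nhds (0 : EuclideanSpace ℝ (Fin d))

/-- A unit ball is strictly convex if its boundary contains no segment of positive length. -/
def IsStrictlyConvex {d : ℕ} (B : Set (EuclideanSpace ℝ (Fin d))) : Prop :=
  ∀ x y : EuclideanSpace ℝ (Fin d), x ≠ y → ¬ segment ℝ x y ⊆ frontier B

/-- The function φ_w: for `x ∈ ∂B`, `phiW B w x = 0` if `w` is tangent to `B` at `x`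
(equivalently, under strict convexity, if there is no nonzero `s` with `x - s•w ∈ ∂B`);
otherwise it is the (unique, by strict convexity) nonzero scalar `s` with `x - s•w ∈ ∂B`. -/
noncomputable def phiW {d : ℕ} (B : Set (EuclideanSpace ℝ (Fin d)))
    (w : EuclideanSpace ℝ (Fin d)) (x : EuclideanSpace ℝ (Fin d)) : ℝ :=
  if h : ∃ s : ℝ, s ≠ 0 ∧ x - s • w ∈ frontier B then h.choose else 0

section Aux

variable {d : ℕ} {B : Set (EuclideanSpace ℝ (Fin d))}

lemma phiW_eq_zero_iff' {w x : EuclideanSpace ℝ (Fin d)} :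
    phiW B w x = 0 ↔ ¬ ∃ s : ℝ, s ≠ 0 ∧ x - s • w ∈ frontier B := by
  unfold phiW
  split
  · rename_i h
    exact iff_of_false h.choose_spec.1 (not_not_intro h)
  · rename_i h
    exact iff_of_true rfl h

lemma phiW_spec {w x : EuclideanSpace ℝ (Fin d)}
    (h : ∃ s : ℝ, s ≠ 0 ∧ x - s • w ∈ frontier B) :
    phiW B w x ≠ 0 ∧ x - phiW B w x • w ∈ frontier B := by
  unfold phiW
  rw [dif_pos h]
  exact h.choose_spec

lemma phiW_unique {w x : EuclideanSpace ℝ (Fin d)} {s : ℝ} (hs : s ≠ 0)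
    (hmem : x - s • w ∈ frontier B)
    (huniq : ∀ s' : ℝ, s' ≠ 0 → x - s' • w ∈ frontier B → s' = s) : phiW B w x = s := by
  obtain ⟨h1, h2⟩ := phiW_spec (B := B) ⟨s, hs, hmem⟩
  exact huniq _ h1 h2

lemma aux_openSegment (hB : IsUnitBall B) (hBsc : IsStrictlyConvex B)
    {u v : EuclideanSpace ℝ (Fin d)} (hu : u ∈ B) (hv : v ∈ B) (huv : u ≠ v) :
    openSegment ℝ u v ⊆ interior B := by
  have hconv := hB.2.1
  have hclosed := hB.1.isClosed
  intro p hp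
  by_contra hpint
  rw [openSegment_eq_image] at hp
  obtain ⟨t, ⟨ht0, ht1⟩, rfl⟩ := hp
  refine hBsc u v huv ?_
  intro q hq
  rw [segment_eq_image] at hq
  obtain ⟨s, ⟨hs0, hs1⟩, rfl⟩ := hq
  have hqB : (1 - s) • u + s • v ∈ B := hconv hu hv (by linarith) hs0 (by ring)
  rw [hclosed.frontier_eq]
  refine ⟨hqB, fun hqint => hpint ?_⟩
  rcases lt_trichotomy t s with hts | rfl | hst
  · have hs0' : 0 < s := lt_trans ht0 hts
    have hsne : s ≠ 0 := hs0'.ne'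
    have h1 : (t / s) • ((1 - s) • u + s • v) + (1 - t / s) • u = (1 - t) • u + t • v := by
      match_scalars <;> field_simp <;> ring
    show (1 - t) • u + t • v ∈ interior B
    rw [← h1]
    exact hconv.combo_interior_self_mem_interior hqint hu (by positivity)
      (by rw [sub_nonneg]; exact (div_le_one hs0').2 hts.le) (by ring)
  · exact hqint
  · have h1s : 0 < 1 - s := by linarith
    have hsne : (1 : ℝ) - s ≠ 0 := h1s.ne'
    have h1 : ((1 - t) / (1 - s)) • ((1 - s) • u + s • v) + ((t - s) / (1 - s)) • v
        = (1 - t) • u + t • v := by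
      match_scalars <;> field_simp <;> ring
    show (1 - t) • u + t • v ∈ interior B
    rw [← h1]
    exact hconv.combo_interior_self_mem_interior hqint hv
      (div_pos (by linarith) h1s) (div_nonneg (by linarith) h1s.le) (by field_simp; ring)

lemma aux_chord (hB : IsUnitBall B) (hBsc : IsStrictlyConvex B)
    {w : EuclideanSpace ℝ (Fin d)} (hw : w ≠ 0) {x₀ : EuclideanSpace ℝ (Fin d)}
    (hx₀ : x₀ ∈ B) :
    ∃ a b : ℝ, a ≤ 0 ∧ 0 ≤ b ∧
      (∀ t : ℝ, x₀ + t • w ∈ B ↔ t ∈ Set.Icc a b) ∧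
      (∀ t : ℝ, x₀ + t • w ∈ interior B ↔ t ∈ Set.Ioo a b) ∧
      (∀ t : ℝ, x₀ + t • w ∈ frontier B ↔ t = a ∨ t = b) := by
  have hconv := hB.2.1
  have hclosed := hB.1.isClosed
  set T : Set ℝ := {t : ℝ | x₀ + t • w ∈ B} with hT
  have hcont : Continuous fun t : ℝ => x₀ + t • w :=
    continuous_const.add (continuous_id.smul continuous_const)
  have hTclosed : IsClosed T := hclosed.preimage hcont
  obtain ⟨C, hC⟩ := isBounded_iff_forall_norm_le.1 hB.1.isBounded
  have hwpos : 0 < ‖w‖ := norm_pos_iff.2 hw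
  have hTsub : T ⊆ Set.Icc (-((C + ‖x₀‖) / ‖w‖)) ((C + ‖x₀‖) / ‖w‖) := by
    intro t ht
    have h1 : ‖t • w‖ ≤ C + ‖x₀‖ := by
      have h2 : t • w = (x₀ + t • w) - x₀ := by abel
      rw [h2]
      calc ‖(x₀ + t • w) - x₀‖ ≤ ‖x₀ + t • w‖ + ‖x₀‖ := norm_sub_le _ _
        _ ≤ C + ‖x₀‖ := by have := hC _ ht; linarith
    rw [norm_smul, Real.norm_eq_abs] at h1
    have : |t| ≤ (C + ‖x₀‖) / ‖w‖ := (le_div_iff₀ hwpos).2 h1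
    exact abs_le.1 this
  have hTcompact : IsCompact T := (isCompact_Icc).of_isClosed_subset hTclosed hTsub
  have h0T : (0 : ℝ) ∈ T := by
    show x₀ + (0 : ℝ) • w ∈ B
    simpa using hx₀
  have hTne : T.Nonempty := ⟨0, h0T⟩
  have hTconv : Convex ℝ T := by
    intro t₁ h1 t₂ h2 p q hp hq hpq
    show x₀ + (p • t₁ + q • t₂) • w ∈ B
    have key : p • (x₀ + t₁ • w) + q • (x₀ + t₂ • w)
        = (p + q) • x₀ + (p * t₁ + q * t₂) • w := by module
    have hmem := hconv h1 h2 hp hq hpq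
    rw [key, hpq, one_smul] at hmem
    simpa [smul_eq_mul] using hmem
  set a := sInf T with ha
  set b := sSup T with hb
  have haT : a ∈ T := hTcompact.sInf_mem hTne
  have hbT : b ∈ T := hTcompact.sSup_mem hTne
  have ha0 : a ≤ 0 := csInf_le hTcompact.bddBelow h0T
  have hb0 : 0 ≤ b := le_csSup hTcompact.bddAbove h0T
  have hTIcc : T = Set.Icc a b := by
    apply Set.Subset.antisymm
    · intro t ht
      exact ⟨csInf_le hTcompact.bddBelow ht, le_csSup hTcompact.bddAbove ht⟩
    · exact hTconv.ordConnected.out haT hbT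
  have hmemB : ∀ t : ℝ, x₀ + t • w ∈ B ↔ t ∈ Set.Icc a b := by
    intro t
    rw [← hTIcc]
    exact Iff.rfl
  have hmemI : ∀ t : ℝ, x₀ + t • w ∈ interior B ↔ t ∈ Set.Ioo a b := by
    intro t
    constructor
    · intro ht
      have hopen : IsOpen {t : ℝ | x₀ + t • w ∈ interior B} := isOpen_interior.preimage hcont
      have hsub : {t : ℝ | x₀ + t • w ∈ interior B} ⊆ interior T :=
        interior_maximal (fun t' ht' => show x₀ + t' • w ∈ B from interior_subset ht') hopen
      have := hsub ht
      rwa [hTIcc, interior_Icc] at this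
    · intro ht
      have hab : a < b := ht.1.trans ht.2
      have hA : x₀ + a • w ∈ B := (hmemB a).2 ⟨le_refl a, hab.le⟩
      have hBb : x₀ + b • w ∈ B := (hmemB b).2 ⟨hab.le, le_refl b⟩
      have hne : x₀ + a • w ≠ x₀ + b • w := by
        intro h
        apply hab.ne
        have h1 : a • w = b • w := add_left_cancel h
        have h2 : (a - b) • w = 0 := by rw [sub_smul, h1, sub_self]
        rcases smul_eq_zero.1 h2 with h3 | h3
        · exact sub_eq_zero.1 h3
        · exact absurd h3 hw
      apply aux_openSegment hB hBsc hA hBb hne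
      rw [openSegment_eq_image]
      have hba : b - a ≠ 0 := sub_ne_zero.2 hab.ne'
      refine ⟨(t - a) / (b - a), ⟨div_pos (by linarith [ht.1]) (by linarith),
        (div_lt_one (by linarith)).2 (by linarith [ht.2])⟩, ?_⟩
      match_scalars <;> field_simp <;> ring
  have hmemF : ∀ t : ℝ, x₀ + t • w ∈ frontier B ↔ t = a ∨ t = b := by
    intro t
    rw [hclosed.frontier_eq, Set.mem_diff]
    constructor
    · rintro ⟨h1, h2⟩
      have h1' := (hmemB t).1 h1
      have h2' : t ∉ Set.Ioo a b := fun hh => h2 ((hmemI t).2 hh)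
      rcases eq_or_lt_of_le h1'.1 with h | h
      · exact Or.inl h.symm
      · rcases eq_or_lt_of_le h1'.2 with h' | h'
        · exact Or.inr h'
        · exact absurd ⟨h, h'⟩ h2'
    · intro h
      have hab : a ≤ b := ha0.trans hb0
      have hTt : t ∈ Set.Icc a b := by
        rcases h with rfl | rfl
        · exact ⟨le_refl _, hab⟩
        · exact ⟨hab, le_refl _⟩
      refine ⟨(hmemB t).2 hTt, fun hint => ?_⟩
      have h' := (hmemI t).1 hint
      rcases h with rfl | rfl
      · exact lt_irrefl _ h'.1
      · exact lt_irrefl _ h'.2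
  exact ⟨a, b, ha0, hb0, hmemB, hmemI, hmemF⟩

lemma aux_phi_endpoints {w : EuclideanSpace ℝ (Fin d)} {x₀ : EuclideanSpace ℝ (Fin d)}
    {a b : ℝ} (hab : a < b)
    (hfr : ∀ t : ℝ, x₀ + t • w ∈ frontier B ↔ t = a ∨ t = b) :
    phiW B w (x₀ + a • w) = a - b ∧ phiW B w (x₀ + b • w) = b - a := by
  have hrw : ∀ t s : ℝ, x₀ + t • w - s • w = x₀ + (t - s) • w := by
    intro t s; module
  constructor
  · apply phiW_unique (sub_ne_zero.2 hab.ne)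
    · rw [hrw]
      have : a - (a - b) = b := by ring
      rw [this]
      exact (hfr b).2 (Or.inr rfl)
    · intro s' hs' hmem'
      rw [hrw] at hmem'
      rcases (hfr _).1 hmem' with h | h
      · exact absurd (by linarith : s' = 0) hs'
      · linarith
  · apply phiW_unique (sub_ne_zero.2 hab.ne')
    · rw [hrw]
      have : b - (b - a) = a := by ring
      rw [this]
      exact (hfr a).2 (Or.inl rfl)
    · intro s' hs' hmem'
      rw [hrw] at hmem'
      rcases (hfr _).1 hmem' with h | h
      · linarith
      · exact absurd (by linarith : s' = 0) hs'

lemma aux_interior_image (hB : IsUnitBall B) (w : EuclideanSpace ℝ (Fin d)) :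
    interior ((Submodule.span ℝ {w}).mkQ '' B) = (Submodule.span ℝ {w}).mkQ '' interior B := by
  set π := (Submodule.span ℝ {w}).mkQ with hπ
  have hconv := hB.2.1
  have h0B : (0 : EuclideanSpace ℝ (Fin d)) ∈ interior B := mem_interior_iff_mem_nhds.2 hB.2.2.2
  apply Set.Subset.antisymm
  · intro y hy
    have hsmulcont : Continuous fun c : ℝ => c • y := continuous_id.smul continuous_const
    have hopen : IsOpen ((fun c : ℝ => c • y) ⁻¹' interior (π '' B)) :=
      isOpen_interior.preimage hsmulcont
    have h1 : (1 : ℝ) ∈ (fun c : ℝ => c • y) ⁻¹' interior (π '' B) := by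
      simpa using hy
    obtain ⟨ε, hε, hball⟩ := Metric.isOpen_iff.1 hopen 1 h1
    set c : ℝ := 1 + ε / 2 with hc
    have hc1 : 1 < c := by simp [hc]; linarith
    have hcmem : c • y ∈ interior (π '' B) := by
      apply hball
      rw [Metric.mem_ball, Real.dist_eq]
      rw [hc]
      rw [show 1 + ε / 2 - 1 = ε / 2 by ring]
      rw [abs_of_pos (by linarith)]
      linarith
    obtain ⟨x', hx', hπx'⟩ := interior_subset hcmem
    have hcne : c ≠ 0 := by linarith
    have hinv1 : c⁻¹ < 1 := by
      rw [← one_div]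
      exact (div_lt_one (by linarith)).2 hc1
    have hinv0 : 0 ≤ c⁻¹ := inv_nonneg.2 (by linarith)
    refine ⟨c⁻¹ • x', ?_, ?_⟩
    · have := hconv.combo_self_interior_mem_interior hx' h0B hinv0
        (by linarith : (0:ℝ) < 1 - c⁻¹) (by ring)
      simpa using this
    · rw [map_smul, hπx', smul_smul, inv_mul_cancel₀ hcne, one_smul]
  · exact (Submodule.isOpenMap_mkQ _).image_interior_subset B

end Aux


set_option maxHeartbeats 2000000 in
/-- Let d ≥ 2, let B ⊆ ℝ^d be a strictly convex unit ball, let w ∈ ℝ^d be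
nonzero, let W = span{w}, and let π : ℝ^d → ℝ^d/W be the quotient map, with K = π(B).
Then π restricted to the shadow boundary S_w = φ_w^{-1}(0) is a bijection onto the boundary
∂K, and π restricted to each of U^+ = φ_w^{-1}((0,∞)) and U^- = φ_w^{-1}((−∞,0)) is a
bijection onto the interior of K. -/
theorem stmt5 (d : ℕ) (hd : 2 ≤ d) (B : Set (EuclideanSpace ℝ (Fin d)))
    (hB : IsUnitBall B) (hBsc : IsStrictlyConvex B)
    (w : EuclideanSpace ℝ (Fin d)) (hw : w ≠ 0) :
    Set.BijOn (⇑(Submodule.span ℝ {w}).mkQ)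
        {x ∈ frontier B | phiW B w x = 0}
        (frontier ((Submodule.span ℝ {w}).mkQ '' B)) ∧
    Set.BijOn (⇑(Submodule.span ℝ {w}).mkQ)
        {x ∈ frontier B | 0 < phiW B w x}
        (interior ((Submodule.span ℝ {w}).mkQ '' B)) ∧
    Set.BijOn (⇑(Submodule.span ℝ {w}).mkQ)
        {x ∈ frontier B | phiW B w x < 0}
        (interior ((Submodule.span ℝ {w}).mkQ '' B)) := by
  classical
  have hBclosed := hB.1.isClosed
  have hfrB : frontier B ⊆ B := hBclosed.frontier_subset
  set π := (Submodule.span ℝ {w}).mkQ with hπdef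
  have hπcont : Continuous π := π.continuous_of_finiteDimensional
  set K := π '' B with hKdef
  haveI : IsClosed ((Submodule.span ℝ {w} : Submodule ℝ (EuclideanSpace ℝ (Fin d))) : Set (EuclideanSpace ℝ (Fin d))) :=
    Submodule.closed_of_finiteDimensional _
  have hKcl : IsClosed K := (hB.1.image hπcont).isClosed
  have hfrK : frontier K = K \ interior K := hKcl.frontier_eq
  have hintK : interior K = π '' interior B := aux_interior_image hB w
  have hπw : ∀ (x : EuclideanSpace ℝ (Fin d)) (t : ℝ), π (x + t • w) = π x := by
    intro x t
    have h0 : π (t • w) = 0 := by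
      rw [hπdef, Submodule.mkQ_apply, Submodule.Quotient.mk_eq_zero]
      exact Submodule.smul_mem _ _ (Submodule.mem_span_singleton_self w)
    rw [map_add, h0, add_zero]
  have hπeq : ∀ x x' : EuclideanSpace ℝ (Fin d), π x = π x' → ∃ c : ℝ, x' = x + c • w := by
    intro x x' h
    have h2 : x - x' ∈ Submodule.span ℝ {w} := (Submodule.Quotient.eq _).1 h
    obtain ⟨c, hc⟩ := Submodule.mem_span_singleton.1 h2
    refine ⟨-c, ?_⟩
    rw [neg_smul, hc]
    abel
  -- maps-to facts
  have H2 : ∀ x ∈ frontier B, phiW B w x ≠ 0 → π x ∈ interior K := by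
    intro x hx hphi
    have hxB : x ∈ B := hfrB hx
    obtain ⟨a, b, ha0, hb0, hIcc, hIoo, hfr⟩ := aux_chord hB hBsc hw hxB
    have hex : ∃ s : ℝ, s ≠ 0 ∧ x - s • w ∈ frontier B := by
      by_contra h
      exact hphi (phiW_eq_zero_iff'.2 h)
    obtain ⟨hφne, hφmem⟩ := phiW_spec hex
    have hrw : x - phiW B w x • w = x + (-phiW B w x) • w := by module
    rw [hrw] at hφmem
    have hother := (hfr _).1 hφmem
    have h0fr : (0:ℝ) = a ∨ (0:ℝ) = b := (hfr 0).1 (by simpa using hx)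
    have hab : a < b := by
      rcases eq_or_lt_of_le (ha0.trans hb0) with he | h
      · exfalso
        apply hφne
        rcases h0fr with h | h <;> rcases hother with h' | h' <;> linarith
      · exact h
    rw [hintK]
    exact ⟨x + ((a + b) / 2) • w, (hIoo _).2 ⟨by linarith, by linarith⟩, hπw x _⟩
  have H1 : ∀ x ∈ frontier B, phiW B w x = 0 → π x ∈ frontier K := by
    intro x hx hphi
    rw [hfrK]
    refine ⟨⟨x, hfrB hx, rfl⟩, fun hmem => ?_⟩
    rw [hintK] at hmem
    obtain ⟨z, hz, hπz⟩ := hmem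
    obtain ⟨c, hczx⟩ := hπeq x z hπz.symm
    obtain ⟨a, b, ha0, hb0, hIcc, hIoo, hfr⟩ := aux_chord hB hBsc hw (hfrB hx)
    have hcI : c ∈ Set.Ioo a b := (hIoo c).1 (hczx ▸ hz)
    have h0fr : (0:ℝ) = a ∨ (0:ℝ) = b := (hfr 0).1 (by simpa using hx)
    have hnot := phiW_eq_zero_iff'.1 hphi
    rcases h0fr with h | h
    · have hbpos : (0:ℝ) < b := by linarith [hcI.1, hcI.2]
      refine hnot ⟨-b, neg_ne_zero.2 (ne_of_gt hbpos), ?_⟩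
      have hrw : x - (-b) • w = x + b • w := by module
      rw [hrw]
      exact (hfr b).2 (Or.inr rfl)
    · have haneg : a < 0 := by linarith [hcI.1, hcI.2]
      refine hnot ⟨-a, neg_ne_zero.2 (ne_of_lt haneg), ?_⟩
      have hrw : x - (-a) • w = x + a • w := by module
      rw [hrw]
      exact (hfr a).2 (Or.inl rfl)
  -- surjectivity facts
  have H3 : ∀ y ∈ frontier K, ∃ x, (x ∈ frontier B ∧ phiW B w x = 0) ∧ π x = y := by
    intro y hy
    rw [hfrK] at hy
    obtain ⟨⟨x₀, hx₀, rfl⟩, hnotint⟩ := hy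
    obtain ⟨a, b, ha0, hb0, hIcc, hIoo, hfr⟩ := aux_chord hB hBsc hw hx₀
    have hab : a = b := by
      by_contra hne
      have hab' : a < b := lt_of_le_of_ne (ha0.trans hb0) hne
      apply hnotint
      rw [hintK]
      exact ⟨x₀ + ((a + b) / 2) • w, (hIoo _).2 ⟨by linarith, by linarith⟩, hπw x₀ _⟩
    have ha : a = 0 := le_antisymm ha0 (by rw [hab]; exact hb0)
    have hxfr : x₀ ∈ frontier B := by
      have := (hfr 0).2 (Or.inl ha.symm)
      simpa using this
    have hphi : phiW B w x₀ = 0 := by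
      rw [phiW_eq_zero_iff']
      rintro ⟨s, hs, hmem⟩
      have hrw : x₀ - s • w = x₀ + (-s) • w := by module
      rw [hrw] at hmem
      rcases (hfr _).1 hmem with h | h
      · exact hs (by linarith)
      · exact hs (by linarith)
    exact ⟨x₀, ⟨hxfr, hphi⟩, rfl⟩
  have H4 : ∀ y ∈ interior K, (∃ x, (x ∈ frontier B ∧ 0 < phiW B w x) ∧ π x = y) ∧
      (∃ x, (x ∈ frontier B ∧ phiW B w x < 0) ∧ π x = y) := by
    intro y hy
    rw [hintK] at hy
    obtain ⟨z, hz, rfl⟩ := hy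
    obtain ⟨a, b, ha0, hb0, hIcc, hIoo, hfr⟩ := aux_chord hB hBsc hw (interior_subset hz)
    have h0I : (0:ℝ) ∈ Set.Ioo a b := (hIoo 0).1 (by simpa using hz)
    have hab : a < b := h0I.1.trans h0I.2
    obtain ⟨hphiA, hphiB⟩ := aux_phi_endpoints (B := B) hab hfr
    constructor
    · exact ⟨z + b • w, ⟨(hfr b).2 (Or.inr rfl), by rw [hphiB]; linarith⟩, hπw z b⟩
    · exact ⟨z + a • w, ⟨(hfr a).2 (Or.inl rfl), by rw [hphiA]; linarith⟩, hπw z a⟩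
  refine ⟨⟨fun x hx => H1 x hx.1 hx.2, ?_, fun y hy => ?_⟩,
    ⟨fun x hx => H2 x hx.1 (ne_of_gt hx.2), ?_, fun y hy => ?_⟩,
    ⟨fun x hx => H2 x hx.1 (ne_of_lt hx.2), ?_, fun y hy => ?_⟩⟩
  · -- InjOn on S
    intro x hx x' hx' hxy
    obtain ⟨c, rfl⟩ := hπeq x x' hxy
    by_contra hne
    have hc : c ≠ 0 := fun hc0 => hne (by rw [hc0]; simp)
    apply phiW_eq_zero_iff'.1 hx'.2
    refine ⟨c, hc, ?_⟩
    have hrw : x + c • w - c • w = x := by module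
    rw [hrw]
    exact hx.1
  · obtain ⟨x, hx, hπx⟩ := H3 y hy
    exact ⟨x, hx, hπx⟩
  · -- InjOn on U+
    intro x hx x' hx' hxy
    obtain ⟨c, rfl⟩ := hπeq x x' hxy
    by_contra hne
    have hc : c ≠ 0 := fun hc0 => hne (by rw [hc0]; simp)
    obtain ⟨a, b, ha0, hb0, hIcc, hIoo, hfr⟩ := aux_chord hB hBsc hw (hfrB hx.1)
    have h0m : (0:ℝ) = a ∨ (0:ℝ) = b := (hfr 0).1 (by simpa using hx.1)
    have hcm : c = a ∨ c = b := (hfr c).1 hx'.1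
    have hab : a < b := by
      rcases eq_or_lt_of_le (ha0.trans hb0) with he | h
      · exfalso; apply hc
        rcases h0m with h | h <;> rcases hcm with h' | h' <;> linarith
      · exact h
    obtain ⟨hphiA, hphiB⟩ := aux_phi_endpoints (B := B) hab hfr
    rcases h0m with h | h <;> rcases hcm with h' | h'
    · exact hc (by linarith)
    · have hxa : x = x + a • w := by rw [← h]; simp
      have h2 : phiW B w x = a - b := by
        have h3 : phiW B w x = phiW B w (x + a • w) := by rw [← hxa]
        rw [h3]; exact hphiA
      have := hx.2
      linarith
    · have h2 : phiW B w (x + c • w) = a - b := by rw [h']; exact hphiA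
      have := hx'.2
      linarith
    · exact hc (by linarith)
  · exact (fun ⟨x, hx, hπx⟩ => ⟨x, hx, hπx⟩) ((H4 y hy).1)
  · -- InjOn on U-
    intro x hx x' hx' hxy
    obtain ⟨c, rfl⟩ := hπeq x x' hxy
    by_contra hne
    have hc : c ≠ 0 := fun hc0 => hne (by rw [hc0]; simp)
    obtain ⟨a, b, ha0, hb0, hIcc, hIoo, hfr⟩ := aux_chord hB hBsc hw (hfrB hx.1)
    have h0m : (0:ℝ) = a ∨ (0:ℝ) = b := (hfr 0).1 (by simpa using hx.1)
    have hcm : c = a ∨ c = b := (hfr c).1 hx'.1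
    have hab : a < b := by
      rcases eq_or_lt_of_le (ha0.trans hb0) with he | h
      · exfalso; apply hc
        rcases h0m with h | h <;> rcases hcm with h' | h' <;> linarith
      · exact h
    obtain ⟨hphiA, hphiB⟩ := aux_phi_endpoints (B := B) hab hfr
    rcases h0m with h | h <;> rcases hcm with h' | h'
    · exact hc (by linarith)
    · have h2 : phiW B w (x + c • w) = b - a := by rw [h']; exact hphiB
      have := hx'.2
      linarith
    · have hxb : x = x + b • w := by rw [← h]; simp
      have h2 : phiW B w x = b - a := by
        have h3 : phiW B w x = phiW B w (x + b • w) := by rw [← hxb]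
        rw [h3]; exact hphiB
      have := hx.2
      linarith
    · exact hc (by linarith)
  · exact (fun ⟨x, hx, hπx⟩ => ⟨x, hx, hπx⟩) ((H4 y hy).2)
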